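/- arXiv:1110.2481 — 2 statements merged into one kernel-verified Lean document; each statement's English description precedes it below -/
import Mathlib

section
/- Let T > 0 and d ≥ 1. Let (t_n, b_n) be a sequence with t_n ∈ [0,T] and b_n : [0,T] → ℝ^d continuous of bounded variation and stopped (a_{t_n} b_n = b_n), which is Cauchy with respect to ρ_{1-var}, i.e. for every ε > 0 there is N such that ρ_{1-var}((t_n,b_n),(t_m,b_m)) < ε for all n, m ≥ N. Then there exist t ∈ [0,T] and a continuous bounded-variation function b : [0,T] → ℝ^d with a_t b = b such that ρ_{1-var}((t_n,b_n),(t,b)) → 0 as n → ∞. -/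
/-!
For stopped paths, `ρ_{1-var}` between `(t_n, b_n)` and `(t_m, b_m)` is `|t_n - t_m|` plus the
variation of `b_n - b_m`. Hence `t_n → t`, and the paths, normalised at `0` and stopped at `t`,
converge uniformly to a continuous path `b`; lower semicontinuity of the variation under pointwise
convergence turns the Cauchy bound into convergence in variation. The only delicate term is the
variation of `b_m` on `[t, T]`, which equals its variation on `[t, max t t_m]`: it is close to
the variation of a fixed `b_N` on that shrinking interval, which is small because `b_N` is
continuous of bounded variation.
-/

open Filter

/-- The metric `ρ_{1-var}((t,b),(s,e)) = |t - s| + |a_t b - a_s e|_{1-var;[0,T]}`,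
where `a_t` is the stopping operator `(a_t x)(r) = x(min(r,t))`. -/
noncomputable def rho1var {d : ℕ} (T : ℝ) (t : ℝ) (b : ℝ → EuclideanSpace ℝ (Fin d))
    (s : ℝ) (e : ℝ → EuclideanSpace ℝ (Fin d)) : ℝ :=
  |t - s| + (eVariationOn (fun r => b (min r t) - e (min r s)) (Set.Icc 0 T)).toReal

open Set Topology
open scoped ENNReal

section PseudoEMetric

variable {α E : Type*} [LinearOrder α] [PseudoEMetricSpace E]

lemma eVariationOn_Icc_add_Icc (f : α → E) {a b c : α} (hab : a ≤ b) (hbc : b ≤ c) :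
    eVariationOn f (Icc a b) + eVariationOn f (Icc b c) = eVariationOn f (Icc a c) := by
  simpa only [univ_inter] using eVariationOn.Icc_add_Icc f hab hbc (mem_univ b)

lemma eVariationOn_eq_zero_of_subset_Ici {f : α → E} {t : α} (hf : ∀ r, f (min r t) = f r)
    {s : Set α} (hs : s ⊆ Ici t) : eVariationOn f s = 0 :=
  (eVariationOn.eq_zero_iff f).2 fun x hx y hy => by
    rw [← hf x, ← hf y, min_eq_right (hs hx), min_eq_right (hs hy), edist_self]

lemma eVariationOn_le_of_tendsto {ι : Type*} {l : Filter ι} [l.NeBot] {F : ι → α → E}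
    {f : α → E} {s : Set α} {c : ℝ≥0∞} (hF : ∀ x ∈ s, Tendsto (fun i => F i x) l (𝓝 (f x)))
    (hc : ∀ᶠ i in l, eVariationOn (F i) s ≤ c) : eVariationOn f s ≤ c := by
  by_contra! h
  obtain ⟨i, hlt, hle⟩ := ((eVariationOn.lowerSemicontinuous_aux hF h).and hc).exists
  exact (hlt.trans_le hle).false

end PseudoEMetric

section SeminormedGroup

variable {α E : Type*} [LinearOrder α] [SeminormedAddCommGroup E]

lemma eVariationOn_add_le (f g : α → E) (s : Set α) :
    eVariationOn (f + g) s ≤ eVariationOn f s + eVariationOn g s := by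
  refine iSup_le fun ⟨n, u, hu, us⟩ => ?_
  calc ∑ i ∈ Finset.range n, edist ((f + g) (u (i + 1))) ((f + g) (u i))
      ≤ ∑ i ∈ Finset.range n,
          (edist (f (u (i + 1))) (f (u i)) + edist (g (u (i + 1))) (g (u i))) :=
        Finset.sum_le_sum fun i _ => edist_add_add_le _ _ _ _
    _ = _ := Finset.sum_add_distrib
    _ ≤ _ := add_le_add (eVariationOn.sum_le hu us) (eVariationOn.sum_le hu us)

lemma eVariationOn_neg (f : α → E) (s : Set α) : eVariationOn (-f) s = eVariationOn f s := by
  simp only [eVariationOn, Pi.neg_apply, edist_neg_neg]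

lemma eVariationOn_sub_le (f g : α → E) (s : Set α) :
    eVariationOn (f - g) s ≤ eVariationOn f s + eVariationOn g s := by
  simpa only [sub_eq_add_neg, eVariationOn_neg] using eVariationOn_add_le f (-g) s

lemma BoundedVariationOn.sub {f g : α → E} {s : Set α} (hf : BoundedVariationOn f s)
    (hg : BoundedVariationOn g s) : BoundedVariationOn (f - g) s :=
  ne_top_of_le_ne_top (ENNReal.add_ne_top.2 ⟨hf, hg⟩) (eVariationOn_sub_le f g s)

lemma eVariationOn_add_const (f : α → E) (v : E) (s : Set α) :
    eVariationOn (fun x => f x + v) s = eVariationOn f s := by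
  simp only [eVariationOn, edist_add_right]

lemma eVariationOn_sub_const (f : α → E) (v : E) (s : Set α) :
    eVariationOn (fun x => f x - v) s = eVariationOn f s := by
  simpa only [sub_eq_add_neg] using eVariationOn_add_const f (-v) s

lemma eVariationOn_sub_comp_min (f : α → E) {a τ b : α} (haτ : a ≤ τ) (hτb : τ ≤ b) :
    eVariationOn (fun r => f r - f (min r τ)) (Icc a b) = eVariationOn f (Icc τ b) := by
  have hleft : eVariationOn (fun r => f r - f (min r τ)) (Icc a τ) = 0 :=
    (eVariationOn.eq_zero_iff _).2 fun x hx y hy => by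
      simp only [min_eq_left hx.2, min_eq_left hy.2, sub_self, edist_self]
  have hright : EqOn (fun r => f r - f (min r τ)) (fun r => f r - f τ) (Icc τ b) :=
    fun r hr => by simp only [min_eq_right hr.1]
  rw [← eVariationOn_Icc_add_Icc _ haτ hτb, hleft, zero_add, eVariationOn.congr hright,
    eVariationOn_sub_const]

lemma edist_sub_le_eVariationOn_sub {f g : α → E} {s : Set α} {a x : α} (ha : a ∈ s)
    (hx : x ∈ s) : edist (f x - f a) (g x - g a) ≤ eVariationOn (f - g) s := by
  calc edist (f x - f a) (g x - g a) = edist ((f - g) x) ((f - g) a) := by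
        simp only [edist_eq_enorm_sub, Pi.sub_apply]
        congr 1
        abel
    _ ≤ _ := eVariationOn.edist_le _ hx ha

def CauchyInVariation (F : ℕ → α → E) (s : Set α) : Prop :=
  ∀ ε : ℝ≥0∞, 0 < ε → ∃ N, ∀ m ≥ N, ∀ n ≥ N, eVariationOn (F m - F n) s < ε

lemma CauchyInVariation.tendsto_eVariationOn_sub {F G : ℕ → α → E} {f : α → E} {s : Set α}
    (hF : CauchyInVariation F s) (hG : ∀ x ∈ s, Tendsto (fun m => G m x) atTop (𝓝 (f x)))
    (hFG : Tendsto (fun m => eVariationOn (F m - G m) s) atTop (𝓝 0)) :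
    Tendsto (fun n => eVariationOn (F n - f) s) atTop (𝓝 0) := by
  rw [ENNReal.tendsto_nhds_zero]
  intro ε hε
  obtain ⟨N, hN⟩ := hF (ε / 2) (ENNReal.half_pos hε.ne')
  filter_upwards [eventually_ge_atTop N] with n hn
  refine eVariationOn_le_of_tendsto (F := fun m => F n - G m)
    (fun x hx => tendsto_const_nhds.sub (hG x hx)) ?_
  filter_upwards [eventually_ge_atTop N,
    ENNReal.tendsto_nhds_zero.1 hFG (ε / 2) (ENNReal.half_pos hε.ne')] with m hm hFG_m
  calc eVariationOn (F n - G m) s ≤ eVariationOn (F n - F m) s + eVariationOn (F m - G m) s := by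
        simpa only [sub_add_sub_cancel] using eVariationOn_add_le (F n - F m) (F m - G m) s
    _ ≤ ε / 2 + ε / 2 := add_le_add (hN n hn m hm).le hFG_m
    _ = ε := ENNReal.add_halves ε

end SeminormedGroup

section Stopped

variable {α E : Type*} [LinearOrder α] [TopologicalSpace α] [OrderTopology α]
  [SeminormedAddCommGroup E]

theorem CauchyInVariation.tendsto_eVariationOn_Icc_of_stopped {F : ℕ → α → E} {t : ℕ → α}
    {a b t₀ : α} (hF : CauchyInVariation F (Icc a b))
    (hcont : ∀ n, ContinuousOn (F n) (Icc a b)) (hbv : ∀ n, BoundedVariationOn (F n) (Icc a b))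
    (hstop : ∀ n r, F n (min r (t n)) = F n r) (ht : ∀ n, t n ∈ Icc a b)
    (ht₀ : Tendsto t atTop (𝓝 t₀)) :
    Tendsto (fun n => eVariationOn (F n) (Icc t₀ b)) atTop (𝓝 0) := by
  have ht₀mem : t₀ ∈ Icc a b := isClosed_Icc.mem_of_tendsto ht₀ (.of_forall ht)
  rw [ENNReal.tendsto_nhds_zero]
  intro ε hε
  obtain ⟨N, hN⟩ := hF (ε / 2) (ENNReal.half_pos hε.ne')
  set τ : ℕ → α := fun m => max t₀ (t m)
  have hτb : ∀ m, τ m ≤ b := fun m => max_le ht₀mem.2 (ht m).2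
  have hτ : Tendsto τ atTop (𝓝[Icc a b] t₀) :=
    tendsto_nhdsWithin_iff.2 ⟨by
      simpa only [max_self] using (tendsto_const_nhds (x := t₀)).max ht₀,
      .of_forall fun m => ⟨ht₀mem.1.trans (le_max_left _ _), hτb m⟩⟩
  have hsmall := ((hbv N).tendsto_eVariationOn_Icc_zero_right t₀
    ((hcont N t₀ ht₀mem).mono inter_subset_left)).comp hτ
  filter_upwards [eventually_ge_atTop N,
    ENNReal.tendsto_nhds_zero.1 hsmall (ε / 2) (ENNReal.half_pos hε.ne')] with m hm hsmall_m
  have hsub : Icc t₀ (τ m) ⊆ Icc a b := Icc_subset_Icc ht₀mem.1 (hτb m)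
  calc eVariationOn (F m) (Icc t₀ b) = eVariationOn (F m) (Icc t₀ (τ m)) := by
        rw [← eVariationOn_Icc_add_Icc _ (le_max_left _ _) (hτb m),
          eVariationOn_eq_zero_of_subset_Ici (hstop m)
            (Icc_subset_Ici_self.trans (Ici_subset_Ici.2 (le_max_right _ _))), add_zero]
    _ ≤ eVariationOn (F m - F N) (Icc t₀ (τ m)) + eVariationOn (F N) (Icc t₀ (τ m)) := by
        simpa only [sub_add_cancel] using eVariationOn_add_le (F m - F N) (F N) _
    _ ≤ ε / 2 + ε / 2 := by
        gcongr
        · exact (eVariationOn.mono _ hsub).trans (hN m hm N le_rfl).le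
        · exact (eVariationOn.mono _ (subset_inter hsub subset_rfl)).trans hsmall_m
    _ = ε := ENNReal.add_halves ε

theorem CauchyInVariation.exists_tendsto_of_stopped [CompleteSpace E] {F : ℕ → α → E}
    {t : ℕ → α} {a b t₀ : α} (hF : CauchyInVariation F (Icc a b))
    (hcont : ∀ n, ContinuousOn (F n) (Icc a b)) (hbv : ∀ n, BoundedVariationOn (F n) (Icc a b))
    (hstop : ∀ n r, F n (min r (t n)) = F n r) (ht : ∀ n, t n ∈ Icc a b)
    (ht₀ : Tendsto t atTop (𝓝 t₀)) :
    ∃ f : α → E, ContinuousOn f (Icc a b) ∧ BoundedVariationOn f (Icc a b) ∧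
      (∀ r, f (min r t₀) = f r) ∧
      Tendsto (fun n => eVariationOn (F n - f) (Icc a b)) atTop (𝓝 0) := by
  set s := Icc a b
  have ht₀mem : t₀ ∈ s := isClosed_Icc.mem_of_tendsto ht₀ (.of_forall ht)
  have ha : a ∈ s := ⟨le_rfl, ht₀mem.1.trans ht₀mem.2⟩
  set φ : α → α := fun r => max (min r t₀) a
  have hφs : ∀ r, φ r ∈ s := fun r =>
    ⟨le_max_right _ _, max_le ((min_le_right _ _).trans ht₀mem.2) ha.2⟩
  -- Clamping into `[a, t₀]` makes every `G m`, hence the limit, stopped at `t₀` on all of `α`;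
  -- normalising at `a` makes the values converge, not only the increments.
  set G : ℕ → α → E := fun m r => F m (φ r) - F m a
  have hG_cauchy : UniformCauchySeqOn G atTop univ :=
    Metric.uniformCauchySeqOn_iff.2 fun ε hε => by
      obtain ⟨N, hN⟩ := hF (ENNReal.ofReal ε) (ENNReal.ofReal_pos.2 hε)
      exact ⟨N, fun m hm n hn r _ => edist_lt_ofReal.1
        ((edist_sub_le_eVariationOn_sub ha (hφs r)).trans_lt (hN m hm n hn))⟩
  set f : α → E := fun r => limUnder atTop fun m => G m r
  have hGf : TendstoUniformly G f atTop := tendstoUniformlyOn_univ.1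
    (hG_cauchy.tendstoUniformlyOn_of_tendsto fun r _ =>
      (hG_cauchy.cauchySeq (mem_univ r)).tendsto_limUnder)
  have hf_stop : ∀ r, f (min r t₀) = f r := fun r => by
    simp only [f, G, φ, min_assoc, min_self]
  have hf_cont : ContinuousOn f s := hGf.tendstoUniformlyOn.continuousOn
    (.of_forall fun m => ((hcont m).comp ((continuous_id.min continuous_const).max
      continuous_const).continuousOn fun r _ => hφs r).sub continuousOn_const)
  have hFG : Tendsto (fun m => eVariationOn (F m - G m) s) atTop (𝓝 0) := by
    refine (hF.tendsto_eVariationOn_Icc_of_stopped hcont hbv hstop ht ht₀).congr fun m => ?_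
    have hEq : EqOn (F m - G m) (fun r => (F m r - F m (min r t₀)) + F m a) s := fun r hr => by
      simp only [G, φ, Pi.sub_apply, max_eq_left (le_min hr.1 ht₀mem.1)]
      abel
    rw [eVariationOn.congr hEq, eVariationOn_add_const,
      eVariationOn_sub_comp_min _ ht₀mem.1 ht₀mem.2]
  have hlim := hF.tendsto_eVariationOn_sub (fun r _ => hGf.tendsto_at r) hFG
  obtain ⟨n, hn⟩ := (hlim.eventually (gt_mem_nhds one_pos)).exists
  have hf_bv : BoundedVariationOn f s := by
    have := (hbv n).sub (ne_top_of_lt hn)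
    rwa [sub_sub_cancel] at this
  exact ⟨f, hf_cont, hf_bv, hf_stop, hlim⟩

end Stopped

lemma rho1var_of_stopped {d : ℕ} {T t s : ℝ} {b e : ℝ → EuclideanSpace ℝ (Fin d)}
    (hb : ∀ r, b (min r t) = b r) (he : ∀ r, e (min r s) = e r) :
    rho1var T t b s e = |t - s| + (eVariationOn (b - e) (Icc 0 T)).toReal := by
  simp only [rho1var, hb, he]
  rfl

theorem stmt_3_general (T : ℝ) (d : ℕ)
    (t : ℕ → ℝ) (b : ℕ → ℝ → EuclideanSpace ℝ (Fin d))
    (ht : ∀ n, t n ∈ Set.Icc 0 T)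
    (hcont : ∀ n, ContinuousOn (b n) (Set.Icc 0 T))
    (hbv : ∀ n, BoundedVariationOn (b n) (Set.Icc 0 T))
    (hstop : ∀ n r, b n (min r (t n)) = b n r)
    (hcauchy : ∀ ε : ℝ, 0 < ε → ∃ N : ℕ, ∀ n ≥ N, ∀ m ≥ N,
      rho1var T (t n) (b n) (t m) (b m) < ε) :
    ∃ tl ∈ Set.Icc 0 T, ∃ bl : ℝ → EuclideanSpace ℝ (Fin d),
      ContinuousOn bl (Set.Icc 0 T) ∧ BoundedVariationOn bl (Set.Icc 0 T) ∧
      (∀ r, bl (min r tl) = bl r) ∧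
      Tendsto (fun n => rho1var T (t n) (b n) tl bl) atTop (nhds 0) := by
  have hrho : ∀ n m, rho1var T (t n) (b n) (t m) (b m)
      = |t n - t m| + (eVariationOn (b n - b m) (Icc 0 T)).toReal :=
    fun n m => rho1var_of_stopped (hstop n) (hstop m)
  have ht_cauchy : CauchySeq t := Metric.cauchySeq_iff.2 fun ε hε =>
    (hcauchy ε hε).imp fun N hN m hm n hn => by
      have := hN m hm n hn
      rw [hrho, ← Real.dist_eq] at this
      linarith [ENNReal.toReal_nonneg (a := eVariationOn (b m - b n) (Icc 0 T))]
  have hb_cauchy : CauchyInVariation b (Icc 0 T) := fun ε hε => by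
    obtain ⟨r, -, hr, hrε⟩ := ENNReal.lt_iff_exists_real_btwn.1 hε
    refine (hcauchy r (ENNReal.ofReal_pos.1 hr)).imp fun N hN m hm n hn => lt_trans ?_ hrε
    rw [ENNReal.lt_ofReal_iff_toReal_lt ((hbv m).sub (hbv n))]
    linarith [hN m hm n hn, hrho m n, abs_nonneg (t m - t n)]
  obtain ⟨tl, htl⟩ := cauchySeq_tendsto_of_complete ht_cauchy
  obtain ⟨bl, hbl_cont, hbl_bv, hbl_stop, hlim⟩ :=
    hb_cauchy.exists_tendsto_of_stopped hcont hbv hstop ht htl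
  refine ⟨tl, isClosed_Icc.mem_of_tendsto htl (.of_forall ht), bl, hbl_cont, hbl_bv, hbl_stop, ?_⟩
  have := (htl.sub_const tl).abs.add ((ENNReal.tendsto_toReal ENNReal.zero_ne_top).comp hlim)
  simpa [rho1var_of_stopped (hstop _) hbl_stop] using this

/-- every `ρ_{1-var}`-Cauchy sequence of stopped continuous
bounded-variation paths converges in `ρ_{1-var}` to a stopped continuous
bounded-variation path. -/
theorem stmt_3 (T : ℝ) (hT : 0 < T) (d : ℕ) (hd : 1 ≤ d)
    (t : ℕ → ℝ) (b : ℕ → ℝ → EuclideanSpace ℝ (Fin d))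
    (ht : ∀ n, t n ∈ Set.Icc 0 T)
    (hcont : ∀ n, ContinuousOn (b n) (Set.Icc 0 T))
    (hbv : ∀ n, BoundedVariationOn (b n) (Set.Icc 0 T))
    (hstop : ∀ n r, b n (min r (t n)) = b n r)
    (hcauchy : ∀ ε : ℝ, 0 < ε → ∃ N : ℕ, ∀ n ≥ N, ∀ m ≥ N,
      rho1var T (t n) (b n) (t m) (b m) < ε) :
    ∃ tl ∈ Set.Icc 0 T, ∃ bl : ℝ → EuclideanSpace ℝ (Fin d),
      ContinuousOn bl (Set.Icc 0 T) ∧ BoundedVariationOn bl (Set.Icc 0 T) ∧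
      (∀ r, bl (min r tl) = bl r) ∧
      Tendsto (fun n => rho1var T (t n) (b n) tl bl) atTop (nhds 0) :=
  stmt_3_general T d t b ht hcont hbv hstop hcauchy
end

section
/- Let T > 0 and d ≥ 1. Suppose t_n → t in [0,T], x : [0,T] → ℝ^d is continuous of bounded variation, and x_n : [0,T] → ℝ^d are functions of bounded variation with |x_n − x|_{1-var;[0,T]} → 0 and x_n(0) → x(0). Then ρ_{1-var}((t_n,x_n),(t,x)) → 0. In other words, convergence in the product topology of [0,T] × C^{1-var}([0,T],ℝ^d) implies convergence in the metric ρ_{1-var}. -/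
open Filter

/-!
With `a_s e` the path `e` stopped at `s`, split
`a_{tₙ} xₙ - a_t x = a_{tₙ}(xₙ - x) + (a_{tₙ} x - a_t x)`, stopping does not increase variation,
and `a_{tₙ} x - a_t x` is, up to an additive constant, `x` reparametrised monotonically onto the
interval between `tₙ` and `t`. Hence the variation part of `ρ` is at most
`|xₙ - x|_{1-var} + |x|_{1-var; [tₙ ∧ t, tₙ ∨ t]}`, and the second term tends to `0` because a
continuous function of bounded variation has no variation concentrated at a point.
-/

open Set Topology

namespace eVariationOn

variable {α E : Type*} [LinearOrder α] [SeminormedAddCommGroup E]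

theorem sub_le (f g : α → E) (s : Set α) :
    eVariationOn (fun r => f r - g r) s ≤ eVariationOn f s + eVariationOn g s := by
  refine iSup_le fun ⟨n, u, hu, us⟩ => ?_
  calc ∑ i ∈ Finset.range n, edist (f (u (i + 1)) - g (u (i + 1))) (f (u i) - g (u i))
      ≤ ∑ i ∈ Finset.range n,
          (edist (f (u (i + 1))) (f (u i)) + edist (g (u (i + 1))) (g (u i))) := by
        gcongr with i
        rw [edist_eq_enorm_sub, edist_eq_enorm_sub, edist_eq_enorm_sub,
          show f (u (i + 1)) - g (u (i + 1)) - (f (u i) - g (u i))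
            = (f (u (i + 1)) - f (u i)) - (g (u (i + 1)) - g (u i)) by abel]
        exact enorm_sub_le
    _ ≤ eVariationOn f s + eVariationOn g s := by
        rw [Finset.sum_add_distrib]
        exact add_le_add (sum_le hu us) (sum_le hu us)

theorem const_sub (c : E) (f : α → E) (s : Set α) :
    eVariationOn (fun r => c - f r) s = eVariationOn f s := by
  simp only [eVariationOn, edist_sub_left]

theorem sub_const (f : α → E) (c : E) (s : Set α) :
    eVariationOn (fun r => f r - c) s = eVariationOn f s := by
  simp only [eVariationOn, edist_sub_right]

theorem comp_min_le (f : α → E) {a b c : α} (hac : a ≤ c) :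
    eVariationOn (fun r => f (min r c)) (Icc a b) ≤ eVariationOn f (Icc a b) :=
  comp_le_of_monotoneOn f _ ((monotone_id.min monotone_const).monotoneOn _)
    fun _ hr => ⟨le_min hr.1 hac, (min_le_left _ _).trans hr.2⟩

theorem comp_clamp_le (f : α → E) (s : Set α) {a b : α} (hab : a ≤ b) :
    eVariationOn (fun r => f (max a (min r b))) s ≤ eVariationOn f (Icc a b) :=
  comp_le_of_monotoneOn f _ ((monotone_const.max (monotone_id.min monotone_const)).monotoneOn _)
    fun _ _ => ⟨le_max_left _ _, max_le hab (min_le_right _ _)⟩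

/-- For `a ≤ b` the difference of the paths stopped at `a` and at `b` is `f a - f (clamp r)`,
with `clamp r` the projection of `r` onto `[a, b]`. -/
theorem stop_sub_stop_le (f : α → E) (s : Set α) (a b : α) :
    eVariationOn (fun r => f (min r a) - f (min r b)) s ≤ eVariationOn f (uIcc a b) := by
  rcases le_total a b with hab | hba
  · have hclamp : (fun r => f (min r a) - f (min r b)) = fun r => f a - f (max a (min r b)) := by
      ext r
      rcases le_total r a with hra | har
      · simp [hra, hra.trans hab]
      · rcases le_total r b with hrb | hbr <;> simp [*]
    rw [hclamp, const_sub, uIcc_of_le hab]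
    exact comp_clamp_le f s hab
  · have hclamp : (fun r => f (min r a) - f (min r b)) = fun r => f (max b (min r a)) - f b := by
      ext r
      rcases le_total r b with hrb | hbr
      · simp [hrb, hrb.trans hba]
      · rcases le_total r a with hra | har <;> simp [*]
    rw [hclamp, sub_const, uIcc_of_ge hba]
    exact comp_clamp_le f s hba

theorem stop_sub_stop_le_add (b e : α → E) {a c t u : α} (hat : a ≤ t) :
    eVariationOn (fun r => b (min r t) - e (min r u)) (Icc a c)
      ≤ eVariationOn (fun r => b r - e r) (Icc a c) + eVariationOn e (uIcc u t) := by
  have hsplit : (fun r => b (min r t) - e (min r u))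
      = fun r => (b (min r t) - e (min r t)) - (e (min r u) - e (min r t)) := by
    ext r; abel
  rw [hsplit]
  exact (sub_le _ _ _).trans (add_le_add (comp_min_le _ hat) (stop_sub_stop_le e _ u t))

end eVariationOn

theorem BoundedVariationOn.tendsto_eVariationOn_uIcc_zero {α E : Type*} [LinearOrder α]
    [TopologicalSpace α] [OrderTopology α] [PseudoEMetricSpace E] {f : α → E} {s : Set α}
    (hf : BoundedVariationOn f s) (hs : s.OrdConnected) {x : α} (hx : x ∈ s)
    (h : ContinuousWithinAt f s x) :
    Tendsto (fun y => eVariationOn f (uIcc x y)) (𝓝[s] x) (𝓝 0) := by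
  have hsum := (hf.tendsto_eVariationOn_Icc_zero_left (h.mono inter_subset_left)).add
    (hf.tendsto_eVariationOn_Icc_zero_right x (h.mono inter_subset_left))
  rw [zero_add] at hsum
  refine tendsto_of_tendsto_of_tendsto_of_le_of_le' tendsto_const_nhds hsum
    (Eventually.of_forall fun _ => zero_le) ?_
  filter_upwards [self_mem_nhdsWithin] with y hy
  rcases le_total y x with hyx | hxy
  · rw [uIcc_of_ge hyx, inter_eq_right.2 (hs.out hy hx)]
    exact le_self_add
  · rw [uIcc_of_le hxy, inter_eq_right.2 (hs.out hx hy)]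
    exact le_add_self

theorem stmt_7_general (T : ℝ) (d : ℕ)
    (tn : ℕ → ℝ) (t : ℝ) (htn : ∀ n, tn n ∈ Set.Icc 0 T) (ht : t ∈ Set.Icc 0 T)
    (htt : Tendsto tn atTop (nhds t))
    (x : ℝ → EuclideanSpace ℝ (Fin d))
    (hx : ContinuousOn x (Set.Icc 0 T)) (hxv : BoundedVariationOn x (Set.Icc 0 T))
    (xn : ℕ → ℝ → EuclideanSpace ℝ (Fin d))
    (hxnv : ∀ n, BoundedVariationOn (xn n) (Set.Icc 0 T))
    (hvar : Tendsto
      (fun n => (eVariationOn (fun r => xn n r - x r) (Set.Icc 0 T)).toReal)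
      atTop (nhds 0)) :
    Tendsto (fun n => rho1var T (tn n) (xn n) t x) atTop (nhds 0) := by
  have hdiff : Tendsto (fun n => eVariationOn (fun r => xn n r - x r) (Icc 0 T)) atTop (𝓝 0) :=
    (ENNReal.tendsto_toReal_iff (fun n => ne_top_of_le_ne_top (ENNReal.add_ne_top.2
      ⟨hxnv n, hxv⟩) (eVariationOn.sub_le _ _ _)) ENNReal.zero_ne_top).1 (by simpa using hvar)
  have hgap : Tendsto (fun n => eVariationOn x (uIcc t (tn n))) atTop (𝓝 0) :=
    (hxv.tendsto_eVariationOn_uIcc_zero ordConnected_Icc ht (hx t ht)).comp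
      (tendsto_nhdsWithin_iff.2 ⟨htt, Eventually.of_forall htn⟩)
  have hstopped : Tendsto (fun n => eVariationOn (fun r => xn n (min r (tn n)) - x (min r t))
      (Icc 0 T)) atTop (𝓝 0) :=
    tendsto_of_tendsto_of_tendsto_of_le_of_le' tendsto_const_nhds
      (by simpa using hdiff.add hgap) (Eventually.of_forall fun _ => zero_le)
      (Eventually.of_forall fun n => eVariationOn.stop_sub_stop_le_add _ _ (htn n).1)
  have htime : Tendsto (fun n => |tn n - t|) atTop (𝓝 0) := by
    simpa using (htt.sub_const t).abs
  simpa only [rho1var, add_zero, ENNReal.toReal_zero, Function.comp_apply] using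
    htime.add ((ENNReal.tendsto_toReal ENNReal.zero_ne_top).comp hstopped)

/-- convergence in the product topology of
`[0,T] × C^{1-var}([0,T],ℝ^d)` implies convergence in the metric `ρ_{1-var}`. -/
theorem stmt_7 (T : ℝ) (hT : 0 < T) (d : ℕ) (hd : 1 ≤ d)
    (tn : ℕ → ℝ) (t : ℝ) (htn : ∀ n, tn n ∈ Set.Icc 0 T) (ht : t ∈ Set.Icc 0 T)
    (htt : Tendsto tn atTop (nhds t))
    (x : ℝ → EuclideanSpace ℝ (Fin d))
    (hx : ContinuousOn x (Set.Icc 0 T)) (hxv : BoundedVariationOn x (Set.Icc 0 T))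
    (xn : ℕ → ℝ → EuclideanSpace ℝ (Fin d))
    (hxnv : ∀ n, BoundedVariationOn (xn n) (Set.Icc 0 T))
    (hvar : Tendsto
      (fun n => (eVariationOn (fun r => xn n r - x r) (Set.Icc 0 T)).toReal)
      atTop (nhds 0))
    (h0 : Tendsto (fun n => xn n 0) atTop (nhds (x 0))) :
    Tendsto (fun n => rho1var T (tn n) (xn n) t x) atTop (nhds 0) :=
  stmt_7_general T d tn t htn ht htt x hx hxv xn hxnv hvar
end
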